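/- Let M_k be the k×k tridiagonal matrix with diagonal (4, 2, …, 2, 3) (first entry 4, last entry 3, all others 2) and all sub- and super-diagonal entries equal to -1. Then the eigenvalues of M_k are 2 - 2cos(2jπ/(2k+1)) for j = 1, …, k. -/

import Mathlib

/-!
For `θ = 2jπ/(2k+1)` the vector `f n = sin (θ (k - n))`, `n < k`, is an eigenvector of `M_k`
with eigenvalue `2 - 2 cos θ`: the interior rows are the three-term recurrence
`sin (x + θ) + sin (x - θ) = 2 cos θ sin x`, the last row holds because `f k = 0`, and the first
because `(2k+1)θ ∈ 2πℤ` gives `sin (kθ + θ) = -sin (kθ)`. The `k` angles lie in `(0, π)`, where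
`cos` is injective, so these are `k` distinct roots of the degree-`k` characteristic polynomial.
-/

open scoped Classical

/-- `M_k = L(P_k) + e_k e_kᵀ + 2 e_1 e_1ᵀ`, the path Laplacian with one unit added to the last
diagonal entry and two units added to the first diagonal entry. -/
noncomputable def MkMat (k : ℕ) : Matrix (Fin k) (Fin k) ℝ :=
  (SimpleGraph.pathGraph k).lapMatrix ℝ +
    Matrix.diagonal (fun i : Fin k => if (i : ℕ) = k - 1 then 1 else 0) +
    Matrix.diagonal (fun i : Fin k => if (i : ℕ) = 0 then 2 else 0)

open Matrix

namespace SimpleGraph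

theorem sum_neighborFinset_pathGraph {M : Type*} [AddCommMonoid M] {k : ℕ} (i : Fin k)
    (g : ℕ → M) :
    ∑ u ∈ (pathGraph k).neighborFinset i, g u =
      (if i + 1 < k then g (i + 1) else 0) + (if 0 < (i : ℕ) then g (i - 1) else 0) := by
  have split (n : ℕ) : (if (i : ℕ) + 1 = n ∨ n + 1 = i then g n else 0) =
      (if n = i + 1 then g n else 0) + (if 0 < (i : ℕ) ∧ n = i - 1 then g n else 0) := by
    split_ifs <;> first | omega | simp
  rw [neighborFinset_eq_filter, Finset.sum_filter]
  simp only [pathGraph_adj]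
  rw [Fin.sum_univ_eq_sum_range (fun n => if (i : ℕ) + 1 = n ∨ n + 1 = i then g n else 0),
    Finset.sum_congr rfl fun n _ => split n, Finset.sum_add_distrib, Finset.sum_ite_eq',
    ← Finset.sum_filter]
  by_cases hi : 0 < (i : ℕ)
  · simp [hi, show (i : ℕ) - 1 < k by omega]
  · simp [hi]

theorem pathGraph_lapMatrix_mulVec_apply {R : Type*} [NonAssocRing R] {k : ℕ} (f : ℕ → R)
    (i : Fin k) :
    ((pathGraph k).lapMatrix R *ᵥ fun j : Fin k => f j) i =
      (if i + 1 < k then f i - f (i + 1) else 0) +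
        (if 0 < (i : ℕ) then f i - f (i - 1) else 0) := by
  rw [lapMatrix_mulVec_apply, ← card_neighborFinset_eq_degree, ← nsmul_eq_mul,
    ← Finset.sum_const, ← Finset.sum_sub_distrib]
  exact sum_neighborFinset_pathGraph i (fun n => f i - f n)

end SimpleGraph

theorem mkMat_mulVec_apply {k : ℕ} (f : ℕ → ℝ) (i : Fin k) :
    (MkMat k *ᵥ fun j : Fin k => f j) i =
      (if i + 1 < k then f i - f (i + 1) else f i) +
        (if 0 < (i : ℕ) then f i - f (i - 1) else 2 * f i) := by
  simp only [MkMat, add_mulVec, Pi.add_apply, SimpleGraph.pathGraph_lapMatrix_mulVec_apply,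
    mulVec_diagonal]
  have := i.isLt
  split_ifs <;> first | omega | ring

theorem mkMat_mulVec_eq_smul {k : ℕ} {f : ℕ → ℝ} {c : ℝ}
    (hrec : ∀ n, f n + f (n + 2) = c * f (n + 1)) (hfk : f k = 0) (hf1 : f 1 = (c + 1) * f 0) :
    (MkMat k *ᵥ fun j : Fin k => f j) = (2 - c) • fun j : Fin k => f j := by
  ext ⟨i, hik⟩
  rw [mkMat_mulVec_apply, Pi.smul_apply, smul_eq_mul]
  rcases i with _ | m
  · simp only [lt_irrefl, if_false, zero_add]
    split_ifs with hk
    · linear_combination -hf1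
    · obtain rfl : k = 1 := by omega
      linear_combination hfk - hf1
  · simp only [Nat.succ_pos, if_true, add_tsub_cancel_right]
    split_ifs with hk
    · linear_combination -hrec m
    · obtain rfl : k = m + 2 := by omega
      linear_combination hfk - hrec m

theorem Matrix.isRoot_charpoly_of_mulVec_eq_smul {n R : Type*} [Fintype n] [DecidableEq n]
    [CommRing R] [IsDomain R] {A : Matrix n n R} {v : n → R} {μ : R} (hv : v ≠ 0)
    (h : A *ᵥ v = μ • v) : A.charpoly.IsRoot μ := by
  rw [Polynomial.IsRoot, eval_charpoly, ← exists_mulVec_eq_zero_iff]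
  exact ⟨v, hv, by ext; simp [sub_mulVec, h]⟩

open Real

theorem Real.sin_add_add_sin_sub (x θ : ℝ) : sin (x + θ) + sin (x - θ) = 2 * cos θ * sin x := by
  rw [sin_add, sin_sub]; ring

theorem injOn_two_sub_two_cos (k : ℕ) :
    Set.InjOn (fun j : ℕ => 2 - 2 * cos (2 * j * π / (2 * k + 1)))
      (Set.Iic k) := by
  have hangle {j : ℕ} (hj : j ≤ k) : 2 * (j : ℝ) * π / (2 * k + 1) ∈ Set.Icc 0 π := by
    have : (j : ℝ) ≤ k := by exact_mod_cast hj
    constructor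
    · positivity
    · rw [div_le_iff₀ (by positivity)]; nlinarith [pi_pos]
  intro a ha b hb hab
  have := injOn_cos (hangle ha) (hangle hb) (by simpa using hab)
  field_simp at this
  exact_mod_cast this

theorem isRoot_charpoly_mkMat {k j : ℕ} (hj : 1 ≤ j) (hjk : j ≤ k) :
    (MkMat k).charpoly.IsRoot (2 - 2 * cos (2 * j * π / (2 * k + 1))) := by
  set θ := 2 * (j : ℝ) * π / (2 * k + 1) with hθ
  have hθ_pos : 0 < θ := by positivity
  have hθ_lt : θ < π := by
    have : (j : ℝ) ≤ k := by exact_mod_cast hjk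
    rw [hθ, div_lt_iff₀ (by positivity)]; nlinarith [pi_pos]
  have hwrap : sin (θ * k + θ) = -sin (θ * k) := by
    have : θ * k + θ = -(θ * k) + (j : ℤ) * (2 * π) := by rw [hθ]; field_simp; push_cast; ring
    rw [this, sin_add_int_mul_two_pi, sin_neg]
  have hsin_k : sin (θ * k) ≠ 0 := by
    intro h
    have : sin θ = sin (θ * k + θ) * cos (θ * k) - cos (θ * k + θ) * sin (θ * k) := by
      rw [← sin_sub]; ring_nf
    rw [hwrap, h] at this
    exact (sin_pos_of_pos_of_lt_pi hθ_pos hθ_lt).ne' (by simpa using this)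
  set f : ℕ → ℝ := fun n => sin (θ * (k - n))
  refine isRoot_charpoly_of_mulVec_eq_smul (v := fun i : Fin k => f i) ?_
    (mkMat_mulVec_eq_smul (c := 2 * cos θ) (fun n => ?_) ?_ ?_)
  · have hk : 0 < k := by omega
    exact fun h => hsin_k (by simpa [f] using congrFun h ⟨0, hk⟩)
  · have := sin_add_add_sin_sub (θ * (k - (n + 1))) θ
    simp only [f]; push_cast
    rw [← this]; ring_nf
  · simp [f]
  · have := sin_add_add_sin_sub (θ * k) θ
    simp only [f]; push_cast
    rw [hwrap] at this
    rw [mul_sub, mul_one, sub_zero]; linarith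

theorem spectrum_Mk_general (k : ℕ) :
    (MkMat k).charpoly.roots =
      (Finset.Icc 1 k).val.map
        (fun j : ℕ => 2 - 2 * Real.cos (2 * (j : ℝ) * Real.pi / (2 * (k : ℝ) + 1))) := by
  have hinj : Set.InjOn _ (Finset.Icc 1 k : Set ℕ) :=
    (injOn_two_sub_two_cos k).mono fun j hj => (Finset.mem_Icc.1 hj).2
  rw [← Finset.image_val_of_injOn hinj]
  refine Polynomial.roots_eq_of_natDegree_le_card_of_ne_zero ?_ ?_ (charpoly_monic _).ne_zero
  · simp only [Finset.mem_image, Finset.mem_Icc, forall_exists_index, and_imp]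
    rintro _ j hj hjk rfl
    exact isRoot_charpoly_mkMat hj hjk
  · rw [charpoly_natDegree_eq_dim, Fintype.card_fin, Finset.card_image_of_injOn hinj,
      Nat.card_Icc, Nat.add_sub_cancel]

/-- The eigenvalues of `M_k` are `2 - 2cos(2jπ/(2k+1))` for `j = 1,…,k`. -/
theorem spectrum_Mk (k : ℕ) (hk : 0 < k) :
    (MkMat k).charpoly.roots =
      (Finset.Icc 1 k).val.map
        (fun j : ℕ => 2 - 2 * Real.cos (2 * (j : ℝ) * Real.pi / (2 * (k : ℝ) + 1))) :=
  spectrum_Mk_general k
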